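/- arXiv:0911.1929 — 8 statements merged into one kernel-verified Lean document; each statement's English description precedes it below -/
import Mathlib

section
/- Let r be a real number with r ≠ 0 and r^2 rational. Then r · tan r is irrational. -/
/-!
Cartwright's integrals `I n θ = ∫_{-1}^{1} (1 - x²)ⁿ cos (x θ) dx`, normalised as
`J n θ = θ^(2n+1) I n θ / n!`, satisfy `J 0 = 2 sin θ`, `J 1 = 4 sin θ - 4 θ cos θ` and
`J (n+2) = 2 (2n+3) J (n+1) - 4 θ² J n` (integrate by parts twice), while
`|J n| ≤ 2 |θ| θ²ⁿ / n!`.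

If `θ² = k / D` and `sin θ`, `θ cos θ` are `ℚ`-linearly dependent, both lie in one cyclic
group `ℤ w`, and the recursion keeps `Dⁿ J n` in `ℤ w`. Since `Dⁿ J n → 0`, it vanishes from
some point on; running the recursion backwards then gives `sin θ = θ cos θ = 0`, which is
absurd. Hence `sin r` and `r cos r` are `ℚ`-linearly independent, whereas `r tan r = u ∈ ℚ` would give
`-r² sin r + u r cos r = 0`.
-/

open Real Filter Topology Set intervalIntegral
open scoped Nat Interval

theorem integral_mul_deriv_deriv_eq_deriv_deriv_mul {a b : ℝ} {u u' u'' v v' v'' : ℝ → ℝ}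
    (hu : ∀ x, HasDerivAt u (u' x) x) (hu' : ∀ x, HasDerivAt u' (u'' x) x)
    (hv : ∀ x, HasDerivAt v (v' x) x) (hv' : ∀ x, HasDerivAt v' (v'' x) x)
    (hu'' : Continuous u'') (hv'' : Continuous v'') :
    ∫ x in a..b, u x * v'' x =
      u b * v' b - u a * v' a - (u' b * v b - u' a * v a) + ∫ x in a..b, u'' x * v x := by
  have hu'c : Continuous u' := continuous_iff_continuousAt.2 fun x => (hu' x).continuousAt
  have hv'c : Continuous v' := continuous_iff_continuousAt.2 fun x => (hv' x).continuousAt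
  rw [integral_mul_deriv_eq_deriv_mul (fun x _ => hu x) (fun x _ => hv' x)
      (hu'c.intervalIntegrable _ _) (hv''.intervalIntegrable _ _),
    integral_mul_deriv_eq_deriv_mul (fun x _ => hu' x) (fun x _ => hv x)
      (hu''.intervalIntegrable _ _) (hv'c.intervalIntegrable _ _)]
  ring

theorem sq_mul_integral_mul_cos_mul {θ : ℝ} {u u' u'' : ℝ → ℝ}
    (hu : ∀ x, HasDerivAt u (u' x) x) (hu' : ∀ x, HasDerivAt u' (u'' x) x)
    (hu'' : Continuous u'') :
    θ ^ 2 * ∫ x in (-1)..1, u x * cos (x * θ) =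
      θ * (u 1 + u (-1)) * sin θ + (u' 1 - u' (-1)) * cos θ -
        ∫ x in (-1)..1, u'' x * cos (x * θ) := by
  have hv (x : ℝ) : HasDerivAt (fun x => cos (x * θ)) (-θ * sin (x * θ)) x :=
    (hasDerivAt_mul_const θ).cos.congr_deriv (by ring)
  have hv' (x : ℝ) : HasDerivAt (fun x => -θ * sin (x * θ)) (-θ ^ 2 * cos (x * θ)) x :=
    ((hasDerivAt_mul_const θ).sin.const_mul (-θ)).congr_deriv (by ring)
  have h := integral_mul_deriv_deriv_eq_deriv_deriv_mul (a := -1) (b := 1) hu hu' hv hv' hu''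
    (by fun_prop)
  have hlhs : ∫ x in (-1)..1, u x * (-θ ^ 2 * cos (x * θ)) =
      -θ ^ 2 * ∫ x in (-1)..1, u x * cos (x * θ) := by
    rw [← integral_const_mul]
    simp only [mul_left_comm]
  rw [hlhs, one_mul, neg_one_mul, cos_neg, sin_neg] at h
  linear_combination -h

noncomputable def cartwrightIntegral (n : ℕ) (θ : ℝ) : ℝ :=
  ∫ x in (-1)..1, (1 - x ^ 2) ^ n * cos (x * θ)

section CartwrightIntegral

variable (θ : ℝ)

theorem mul_cartwrightIntegral_zero : θ * cartwrightIntegral 0 θ = 2 * sin θ := by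
  simp [cartwrightIntegral, mul_integral_comp_mul_right, two_mul]

theorem sq_mul_cartwrightIntegral_one :
    θ ^ 2 * cartwrightIntegral 1 θ = 2 * cartwrightIntegral 0 θ - 4 * cos θ := by
  have h := sq_mul_integral_mul_cos_mul (θ := θ) (u := fun x => (1 - x ^ 2) ^ 1)
    (u' := fun x => -2 * x) (u'' := fun _ => -2)
    (fun x => ((hasDerivAt_pow 2 x).const_sub 1).pow 1 |>.congr_deriv (by simp))
    (fun x => ((hasDerivAt_id x).const_mul (-2)).congr_deriv (by simp)) (by fun_prop)
  rw [integral_const_mul] at h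
  simp only [cartwrightIntegral, pow_zero, pow_one, one_mul] at h ⊢
  norm_num at h
  linear_combination h

theorem sq_mul_cartwrightIntegral_add_two (n : ℕ) :
    θ ^ 2 * cartwrightIntegral (n + 2) θ =
      2 * (n + 2) * (2 * n + 3) * cartwrightIntegral (n + 1) θ -
        4 * (n + 2) * (n + 1) * cartwrightIntegral n θ := by
  have h := sq_mul_integral_mul_cos_mul (θ := θ) (u := fun x => (1 - x ^ 2) ^ (n + 2))
    (u' := fun x => -2 * (n + 2) * x * (1 - x ^ 2) ^ (n + 1))
    (u'' := fun x => 4 * (n + 2) * (n + 1) * (1 - x ^ 2) ^ n -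
      2 * (n + 2) * (2 * n + 3) * (1 - x ^ 2) ^ (n + 1))
    (fun x => (((hasDerivAt_pow 2 x).const_sub 1).pow (n + 2)).congr_deriv (by simp; ring))
    (fun x => (((hasDerivAt_id x).const_mul (-2 * (n + 2) : ℝ)).mul
      (((hasDerivAt_pow 2 x).const_sub 1).pow (n + 1))).congr_deriv (by simp; ring))
    (by fun_prop)
  simp only [sub_mul, mul_assoc] at h
  rw [integral_sub, integral_const_mul, integral_const_mul] at h
  · unfold cartwrightIntegral
    norm_num at h
    linear_combination h
  all_goals exact Continuous.intervalIntegrable (by fun_prop) _ _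

theorem abs_cartwrightIntegral_le (n : ℕ) : |cartwrightIntegral n θ| ≤ 2 := by
  have hbound : ∀ x ∈ Ι (-1 : ℝ) 1, ‖(1 - x ^ 2) ^ n * cos (x * θ)‖ ≤ 1 := by
    intro x hx
    rw [uIoc_of_le (by norm_num)] at hx
    have h0 : 0 ≤ 1 - x ^ 2 := by nlinarith [hx.1, hx.2]
    have h1 : 1 - x ^ 2 ≤ 1 := by nlinarith
    rw [norm_mul, norm_pow, Real.norm_of_nonneg h0]
    exact mul_le_one₀ (pow_le_one₀ h0 h1) (norm_nonneg _) (abs_cos_le_one _)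
  have h := norm_integral_le_of_norm_le_const hbound
  norm_num at h
  exact h

end CartwrightIntegral

noncomputable def scaledCartwrightIntegral (n : ℕ) (θ : ℝ) : ℝ :=
  θ ^ (2 * n + 1) * cartwrightIntegral n θ / n !

section ScaledCartwrightIntegral

variable (θ : ℝ)

theorem scaledCartwrightIntegral_zero : scaledCartwrightIntegral 0 θ = 2 * sin θ := by
  simp [scaledCartwrightIntegral, mul_cartwrightIntegral_zero]

theorem scaledCartwrightIntegral_one :
    scaledCartwrightIntegral 1 θ = 4 * sin θ - 4 * (θ * cos θ) := by
  simp only [scaledCartwrightIntegral, Nat.factorial_one, Nat.cast_one, div_one]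
  linear_combination θ * sq_mul_cartwrightIntegral_one θ + 2 * mul_cartwrightIntegral_zero θ

theorem scaledCartwrightIntegral_add_two (n : ℕ) :
    scaledCartwrightIntegral (n + 2) θ =
      2 * (2 * n + 3) * scaledCartwrightIntegral (n + 1) θ -
        4 * θ ^ 2 * scaledCartwrightIntegral n θ := by
  simp only [scaledCartwrightIntegral, Nat.factorial_succ]
  push_cast
  field_simp
  linear_combination θ ^ (2 * n + 3) * sq_mul_cartwrightIntegral_add_two θ n

theorem tendsto_pow_mul_scaledCartwrightIntegral (D : ℝ) :
    Tendsto (fun n => D ^ n * scaledCartwrightIntegral n θ) atTop (𝓝 0) := by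
  have hbound (n : ℕ) :
      ‖D ^ n * scaledCartwrightIntegral n θ‖ ≤ 2 * |θ| * ((|D| * θ ^ 2) ^ n / n !) :=
    calc ‖D ^ n * scaledCartwrightIntegral n θ‖
        = |θ| * (|D| * θ ^ 2) ^ n * |cartwrightIntegral n θ| / n ! := by
          rw [scaledCartwrightIntegral, norm_mul, norm_div, norm_mul, norm_pow, norm_pow,
            Real.norm_eq_abs, Real.norm_eq_abs, Real.norm_eq_abs, RCLike.norm_natCast, pow_succ,
            pow_mul, ← sq_abs θ]
          ring
      _ ≤ |θ| * (|D| * θ ^ 2) ^ n * 2 / n ! := by gcongr; exact abs_cartwrightIntegral_le θ n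
      _ = 2 * |θ| * ((|D| * θ ^ 2) ^ n / n !) := by ring
  refine squeeze_zero_norm hbound ?_
  simpa using (FloorSemiring.tendsto_pow_div_factorial_atTop (|D| * θ ^ 2)).const_mul (2 * |θ|)

variable {θ}

theorem not_eventually_scaledCartwrightIntegral_eq_zero (hθ : θ ≠ 0) :
    ¬ ∀ᶠ n in atTop, scaledCartwrightIntegral n θ = 0 := by
  intro h
  obtain ⟨N, hN⟩ := eventually_atTop.1 h
  have hback (n : ℕ) (h1 : scaledCartwrightIntegral (n + 1) θ = 0)
      (h2 : scaledCartwrightIntegral (n + 2) θ = 0) : scaledCartwrightIntegral n θ = 0 := by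
    have hrec := scaledCartwrightIntegral_add_two θ n
    rw [h1, h2] at hrec
    have : 4 * θ ^ 2 * scaledCartwrightIntegral n θ = 0 := by linarith
    simpa [hθ] using this
  have hall (m : ℕ) : ∀ n, N ≤ n + m → scaledCartwrightIntegral n θ = 0 := by
    induction m with
    | zero => exact hN
    | succ m ih =>
      intro n hn
      by_cases hNn : N ≤ n
      · exact hN n hNn
      · exact hback n (ih (n + 1) (by omega)) (ih (n + 2) (by omega))
  have h0 := scaledCartwrightIntegral_zero θ
  have h1 := scaledCartwrightIntegral_one θ
  rw [hall N 0 (by omega)] at h0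
  rw [hall N 1 (by omega)] at h1
  have hsin : sin θ = 0 := by linarith
  have hcos : cos θ = 0 := by simpa [hsin, hθ] using h1
  simpa [hsin, hcos] using sin_sq_add_cos_sq θ

theorem pow_mul_scaledCartwrightIntegral_mem_zmultiples {w : ℝ} {D k : ℤ} (hk : D * θ ^ 2 = k)
    (hsin : sin θ ∈ AddSubgroup.zmultiples w) (hcos : θ * cos θ ∈ AddSubgroup.zmultiples w)
    (n : ℕ) : (D : ℝ) ^ n * scaledCartwrightIntegral n θ ∈ AddSubgroup.zmultiples w := by
  induction n using Nat.twoStepInduction with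
  | zero => simpa [scaledCartwrightIntegral_zero, nsmul_eq_mul] using nsmul_mem hsin 2
  | one =>
    have : (D : ℝ) ^ 1 * scaledCartwrightIntegral 1 θ =
        (4 * D) • sin θ - (4 * D) • (θ * cos θ) := by
      rw [scaledCartwrightIntegral_one, zsmul_eq_mul, zsmul_eq_mul]; push_cast; ring
    rw [this]
    exact sub_mem (zsmul_mem hsin _) (zsmul_mem hcos _)
  | more n ih0 ih1 =>
    have : (D : ℝ) ^ (n + 2) * scaledCartwrightIntegral (n + 2) θ =
        (2 * (2 * n + 3) * D) • ((D : ℝ) ^ (n + 1) * scaledCartwrightIntegral (n + 1) θ) -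
          (4 * k * D) • ((D : ℝ) ^ n * scaledCartwrightIntegral n θ) := by
      rw [scaledCartwrightIntegral_add_two, zsmul_eq_mul, zsmul_eq_mul]
      push_cast
      rw [← hk]
      ring
    rw [this]
    exact sub_mem (zsmul_mem ih1 _) (zsmul_mem ih0 _)

end ScaledCartwrightIntegral

theorem Filter.Tendsto.eventually_eq_zero_of_mem_zmultiples {α : Type*} {l : Filter α}
    {f : α → ℝ} {w : ℝ} (hf : Tendsto f l (𝓝 0)) (hw : ∀ a, f a ∈ AddSubgroup.zmultiples w) :
    ∀ᶠ a in l, f a = 0 := by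
  rcases eq_or_ne w 0 with rfl | hw0
  · exact Eventually.of_forall fun a => by simpa using hw a
  filter_upwards [hf.eventually (Metric.ball_mem_nhds 0 (abs_pos.2 hw0))] with a ha
  obtain ⟨m, hm⟩ := AddSubgroup.mem_zmultiples_iff.1 (hw a)
  rw [← hm] at ha ⊢
  rw [dist_zero_right, norm_zsmul ℝ, Real.norm_eq_abs, Real.norm_eq_abs] at ha
  have hm1 : |(m : ℝ)| < 1 := by nlinarith [abs_pos.2 hw0]
  have : m = 0 := Int.abs_lt_one_iff.1 (by exact_mod_cast hm1)
  simp [this]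

theorem exists_mem_zmultiples_of_not_linearIndependent {M : Type*} [AddCommGroup M]
    [Module ℚ M] {x y : M} (h : ¬ LinearIndependent ℚ ![x, y]) :
    ∃ w : M, x ∈ AddSubgroup.zmultiples w ∧ y ∈ AddSubgroup.zmultiples w := by
  rw [LinearIndependent.pair_iff] at h
  push Not at h
  obtain ⟨s, t, hst, hne⟩ := h
  rcases eq_or_ne s 0 with rfl | hs
  · have hy : y = 0 := by simpa [hne rfl] using hst
    exact ⟨x, AddSubgroup.mem_zmultiples x, hy ▸ zero_mem _⟩
  set c := -t / s
  have hx : x = c • y := by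
    rw [← smul_right_inj hs, smul_smul, mul_div_cancel₀ _ hs, neg_smul, eq_neg_iff_add_eq_zero,
      hst]
  refine ⟨(c.den : ℚ)⁻¹ • y, AddSubgroup.mem_zmultiples_iff.2 ⟨c.num, ?_⟩,
    AddSubgroup.mem_zmultiples_iff.2 ⟨c.den, ?_⟩⟩
  · rw [hx, ← Int.cast_smul_eq_zsmul ℚ, smul_smul, ← div_eq_mul_inv, Rat.num_div_den]
  · rw [natCast_zsmul, ← Nat.cast_smul_eq_nsmul ℚ, smul_smul, mul_inv_cancel₀ (by simp),
      one_smul]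

theorem linearIndependent_sin_mul_cos {θ : ℝ} (hθ : θ ≠ 0) (hq : ∃ q : ℚ, θ ^ 2 = q) :
    LinearIndependent ℚ ![sin θ, θ * cos θ] := by
  by_contra h
  obtain ⟨w, hsin, hcos⟩ := exists_mem_zmultiples_of_not_linearIndependent h
  obtain ⟨q, hq⟩ := hq
  have hden : (q.den : ℤ) * θ ^ 2 = q.num := by
    push_cast
    rw [hq, mul_comm]
    exact_mod_cast Rat.mul_den_eq_num q
  have hzero :=
    (tendsto_pow_mul_scaledCartwrightIntegral θ _).eventually_eq_zero_of_mem_zmultiples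
      (pow_mul_scaledCartwrightIntegral_mem_zmultiples hden hsin hcos)
  exact not_eventually_scaledCartwrightIntegral_eq_zero hθ
    (hzero.mono fun n hn => by simpa using hn)

theorem r_mul_tan_irrational (r : ℝ) (hr : r ≠ 0) (hq : ∃ q : ℚ, r ^ 2 = (q : ℝ)) :
    Irrational (r * Real.tan r) := by
  have hind := LinearIndependent.pair_iff.1 (linearIndependent_sin_mul_cos hr hq)
  -- Needed because `tan r = 0` when `cos r = 0`.
  have hcos : cos r ≠ 0 := fun h => one_ne_zero (hind 0 1 (by simp [h])).2
  rintro ⟨u, hu⟩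
  obtain ⟨q, hq⟩ := hq
  have hrel : (-q) • sin r + u • (r * cos r) = 0 := by
    rw [Rat.smul_def, Rat.smul_def, hu, Rat.cast_neg, ← hq, tan_eq_sin_div_cos]
    field_simp
    ring
  have hq0 : q = 0 := neg_eq_zero.1 (hind _ _ hrel).1
  exact hr (pow_eq_zero_iff two_ne_zero |>.1 (by simpa [hq0] using hq))
end

section
/- Let r be a real number with r ≠ 0 and r^2 rational. Then r · tanh r is irrational. -/
open Real Filter

namespace RTanhAux

/-- The coefficient `(n+m)! / (m! * (2n+2m+1)!)`. -/
noncomputable def A (n m : ℕ) : ℝ :=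
  (Nat.factorial (n + m) : ℝ) / ((Nat.factorial m : ℝ) * (Nat.factorial (2 * n + 2 * m + 1) : ℝ))

lemma A_pos (n m : ℕ) : 0 < A n m := by
  unfold A
  apply div_pos
  · exact_mod_cast Nat.factorial_pos _
  · have h1 : (0:ℝ) < (Nat.factorial m : ℝ) := by exact_mod_cast Nat.factorial_pos m
    have h2 : (0:ℝ) < (Nat.factorial (2*n+2*m+1) : ℝ) := by exact_mod_cast Nat.factorial_pos _
    exact mul_pos h1 h2

lemma A_le (n m : ℕ) : A n m ≤ 1 / ((Nat.factorial m : ℝ) * (Nat.factorial n : ℝ)) := by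
  unfold A
  have hm : (0:ℝ) < (Nat.factorial m : ℝ) := by exact_mod_cast Nat.factorial_pos m
  have hn : (0:ℝ) < (Nat.factorial n : ℝ) := by exact_mod_cast Nat.factorial_pos n
  have hf : (0:ℝ) < (Nat.factorial (2*n+2*m+1) : ℝ) := by exact_mod_cast Nat.factorial_pos _
  rw [div_le_div_iff₀ (by positivity) (by positivity)]
  have hnat : Nat.factorial (n+m) * (Nat.factorial m * Nat.factorial n)
      ≤ Nat.factorial m * Nat.factorial (2*n+2*m+1) := by
    calc Nat.factorial (n+m) * (Nat.factorial m * Nat.factorial n)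
        = Nat.factorial m * (Nat.factorial (n+m) * Nat.factorial n) := by ring
      _ ≤ Nat.factorial m * (Nat.factorial (n+m) * Nat.factorial (n+m)) :=
          Nat.mul_le_mul_left _ (Nat.mul_le_mul_left _ (Nat.factorial_le (by omega)))
      _ ≤ Nat.factorial m * Nat.factorial ((n+m) + (n+m)) :=
          Nat.mul_le_mul_left _ (Nat.le_of_dvd (Nat.factorial_pos _)
            (Nat.factorial_mul_factorial_dvd_factorial_add _ _))
      _ ≤ Nat.factorial m * Nat.factorial (2*n+2*m+1) :=
          Nat.mul_le_mul_left _ (Nat.factorial_le (by omega))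
  calc (Nat.factorial (n+m) : ℝ) * ((Nat.factorial m : ℝ) * (Nat.factorial n : ℝ))
      = ((Nat.factorial (n+m) * (Nat.factorial m * Nat.factorial n) : ℕ) : ℝ) := by push_cast; ring
    _ ≤ ((Nat.factorial m * Nat.factorial (2*n+2*m+1) : ℕ) : ℝ) := by exact_mod_cast hnat
    _ = 1 * ((Nat.factorial m : ℝ) * (Nat.factorial (2*n+2*m+1) : ℝ)) := by push_cast; ring

lemma summable_term (x : ℝ) (hx : 0 ≤ x) (n : ℕ) :
    Summable (fun m : ℕ => x ^ m * A n m) := by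
  apply Summable.of_nonneg_of_le
    (fun m => mul_nonneg (pow_nonneg hx m) (A_pos n m).le)
    (fun m => ?_)
    ((Real.summable_pow_div_factorial x).mul_left (1 / (Nat.factorial n : ℝ)))
  calc x ^ m * A n m
      ≤ x ^ m * (1 / ((Nat.factorial m : ℝ) * (Nat.factorial n : ℝ))) := by
        exact mul_le_mul_of_nonneg_left (A_le n m) (pow_nonneg hx m)
    _ = 1 / (Nat.factorial n : ℝ) * (x ^ m / (Nat.factorial m : ℝ)) := by ring

/-- The main series. -/
noncomputable def c (x : ℝ) (n : ℕ) : ℝ := ∑' m : ℕ, x ^ m * A n m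

lemma c_pos (x : ℝ) (hx : 0 < x) (n : ℕ) : 0 < c x n :=
  Summable.tsum_pos (summable_term x hx.le n)
    (fun m => mul_nonneg (pow_nonneg hx.le m) (A_pos n m).le) 0
    (mul_pos (pow_pos hx 0) (A_pos n 0))

lemma c_le (x : ℝ) (hx : 0 ≤ x) (n : ℕ) :
    c x n ≤ (∑' m : ℕ, x ^ m / (Nat.factorial m : ℝ)) * (1 / (Nat.factorial n : ℝ)) := by
  rw [← tsum_mul_right]
  apply Summable.tsum_le_tsum _ (summable_term x hx n)
    ((Real.summable_pow_div_factorial x).mul_right _)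
  intro m
  calc x ^ m * A n m
      ≤ x ^ m * (1 / ((Nat.factorial m : ℝ) * (Nat.factorial n : ℝ))) := by
        exact mul_le_mul_of_nonneg_left (A_le n m) (pow_nonneg hx m)
    _ = x ^ m / (Nat.factorial m : ℝ) * (1 / (Nat.factorial n : ℝ)) := by ring

lemma A_zero (n : ℕ) : A n 0 = 2 * (2 * (n:ℝ) + 3) * A (n+1) 0 := by
  unfold A
  rw [show 2*(n+1)+2*0+1 = (2*n+1)+1+1 by ring, show (n+1)+0 = (n+0)+1 by ring,
    show 2*n+2*0+1 = 2*n+1 by ring]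
  rw [Nat.factorial_succ ((2*n+1)+1), Nat.factorial_succ (2*n+1), Nat.factorial_succ (n+0)]
  have h1 : ((2*n+1).factorial : ℝ) ≠ 0 := by exact_mod_cast (Nat.factorial_pos _).ne'
  have h0 : ((Nat.factorial 0 : ℕ) : ℝ) ≠ 0 := by norm_num [Nat.factorial]
  push_cast
  field_simp
  ring

lemma A_succ (n m : ℕ) :
    A n (m+1) = 2 * (2 * (n:ℝ) + 3) * A (n+1) (m+1) + 4 * A (n+2) m := by
  unfold A
  rw [show n+(m+1) = (n+m)+1 by ring, show (n+1)+(m+1) = ((n+m)+1)+1 by ring,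
    show (n+2)+m = ((n+m)+1)+1 by ring,
    show 2*n+2*(m+1)+1 = 2*n+2*m+3 by ring,
    show 2*(n+1)+2*(m+1)+1 = ((2*n+2*m+3)+1)+1 by ring,
    show 2*(n+2)+2*m+1 = ((2*n+2*m+3)+1)+1 by ring]
  rw [Nat.factorial_succ ((2*n+2*m+3)+1), Nat.factorial_succ (2*n+2*m+3),
    Nat.factorial_succ ((n+m)+1), Nat.factorial_succ (n+m), Nat.factorial_succ m]
  have h1 : ((2*n+2*m+3).factorial : ℝ) ≠ 0 := by exact_mod_cast (Nat.factorial_pos _).ne'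
  have h2 : ((n+m).factorial : ℝ) ≠ 0 := by exact_mod_cast (Nat.factorial_pos _).ne'
  have h3 : ((m).factorial : ℝ) ≠ 0 := by exact_mod_cast (Nat.factorial_pos _).ne'
  push_cast
  field_simp
  ring

lemma c_rec (x : ℝ) (hx : 0 ≤ x) (n : ℕ) :
    c x n = 2 * (2 * (n:ℝ) + 3) * c x (n+1) + 4 * x * c x (n+2) := by
  have h1 := summable_term x hx n
  have h2 := summable_term x hx (n+1)
  have h3 := summable_term x hx (n+2)
  have hD : Summable (fun m : ℕ => x ^ m * A n m - 2 * (2 * (n:ℝ) + 3) * (x ^ m * A (n+1) m)) :=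
    h1.sub (h2.mul_left _)
  have key : c x n - 2 * (2 * (n:ℝ) + 3) * c x (n+1)
      = ∑' m : ℕ, (x ^ m * A n m - 2 * (2 * (n:ℝ) + 3) * (x ^ m * A (n+1) m)) := by
    unfold c
    rw [Summable.tsum_sub h1 (h2.mul_left _), tsum_mul_left]
  have hzero : x ^ 0 * A n 0 - 2 * (2 * (n:ℝ) + 3) * (x ^ 0 * A (n+1) 0) = 0 := by
    rw [A_zero n]; ring
  have hsucc : ∀ m : ℕ,
      x ^ (m+1) * A n (m+1) - 2 * (2 * (n:ℝ) + 3) * (x ^ (m+1) * A (n+1) (m+1))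
        = 4 * x * (x ^ m * A (n+2) m) := by
    intro m
    rw [A_succ n m, pow_succ]
    ring
  have : c x n - 2 * (2 * (n:ℝ) + 3) * c x (n+1) = 4 * x * c x (n+2) := by
    rw [key, Summable.tsum_eq_zero_add hD, hzero, zero_add]
    calc (∑' m : ℕ, (x ^ (m+1) * A n (m+1)
            - 2 * (2 * (n:ℝ) + 3) * (x ^ (m+1) * A (n+1) (m+1))))
        = ∑' m : ℕ, 4 * x * (x ^ m * A (n+2) m) := tsum_congr hsucc
      _ = 4 * x * c x (n+2) := by rw [tsum_mul_left]; rfl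
  linarith [this]

lemma sinh_eq (r : ℝ) : Real.sinh r = r * c (r^2) 0 := by
  rw [Real.sinh_eq_tsum]
  unfold c
  rw [← tsum_mul_left]
  apply tsum_congr
  intro m
  have hA : A 0 m = 1 / ((Nat.factorial (2*m+1) : ℕ) : ℝ) := by
    unfold A
    rw [show 0+m = m by ring, show 2*0+2*m+1 = 2*m+1 by ring]
    have h3 : ((m).factorial : ℝ) ≠ 0 := by exact_mod_cast (Nat.factorial_pos _).ne'
    have h4 : (((2*m+1)).factorial : ℝ) ≠ 0 := by exact_mod_cast (Nat.factorial_pos _).ne'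
    field_simp
  rw [hA, pow_succ, pow_mul]
  ring

lemma A_cosh (m : ℕ) :
    (1 : ℝ) / ((Nat.factorial (2*(m+1)) : ℕ) : ℝ) = A 0 (m+1) + 2 * A 1 m := by
  unfold A
  rw [show 0+(m+1) = m+1 by ring, show 2*0+2*(m+1)+1 = ((2*m+1)+1)+1 by ring,
    show 1+m = m+1 by ring, show 2*1+2*m+1 = ((2*m+1)+1)+1 by ring,
    show 2*(m+1) = (2*m+1)+1 by ring]
  rw [Nat.factorial_succ ((2*m+1)+1), Nat.factorial_succ (2*m+1), Nat.factorial_succ m]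
  have h1 : ((2*m+1).factorial : ℝ) ≠ 0 := by exact_mod_cast (Nat.factorial_pos _).ne'
  have h3 : ((m).factorial : ℝ) ≠ 0 := by exact_mod_cast (Nat.factorial_pos _).ne'
  push_cast
  field_simp
  ring

lemma cosh_eq (r : ℝ) : Real.cosh r = c (r^2) 0 + 2 * r^2 * c (r^2) 1 := by
  set x : ℝ := r^2 with hxdef
  have hx : 0 ≤ x := by positivity
  have hcoshsum : Summable (fun m : ℕ => x ^ m / ((Nat.factorial (2*m) : ℕ) : ℝ)) := by
    apply (Real.hasSum_cosh r).summable.congr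
    intro m
    rw [hxdef, ← pow_mul]
  have hcosh : Real.cosh r = ∑' m : ℕ, x ^ m / ((Nat.factorial (2*m) : ℕ) : ℝ) := by
    rw [Real.cosh_eq_tsum]
    apply tsum_congr
    intro m
    rw [hxdef, ← pow_mul]
  have h0s := summable_term x hx 0
  have h1s := summable_term x hx 1
  have hD : Summable (fun m : ℕ => x ^ m / ((Nat.factorial (2*m) : ℕ) : ℝ) - x ^ m * A 0 m) :=
    hcoshsum.sub h0s
  have hzero : x ^ 0 / ((Nat.factorial (2*0) : ℕ) : ℝ) - x ^ 0 * A 0 0 = 0 := by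
    norm_num [A, Nat.factorial]
  have hsucc : ∀ m : ℕ,
      x ^ (m+1) / ((Nat.factorial (2*(m+1)) : ℕ) : ℝ) - x ^ (m+1) * A 0 (m+1)
        = 2 * x * (x ^ m * A 1 m) := by
    intro m
    have := A_cosh m
    rw [div_eq_mul_one_div (x^(m+1)), this, pow_succ]
    ring
  have key : Real.cosh r - c x 0 = 2 * x * c x 1 := by
    rw [hcosh]
    unfold c
    rw [← Summable.tsum_sub hcoshsum h0s, Summable.tsum_eq_zero_add hD, hzero, zero_add]
    calc (∑' m : ℕ, (x ^ (m+1) / ((Nat.factorial (2*(m+1)) : ℕ) : ℝ) - x ^ (m+1) * A 0 (m+1)))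
        = ∑' m : ℕ, 2 * x * (x ^ m * A 1 m) := tsum_congr hsucc
      _ = 2 * x * ∑' m : ℕ, x ^ m * A 1 m := tsum_mul_left
  linarith [key]

/-- two-step induction -/
lemma two_step {P : ℕ → Prop} (h0 : P 0) (h1 : P 1)
    (hstep : ∀ n, P n → P (n+1) → P (n+2)) : ∀ n, P n := by
  have key : ∀ n, P n ∧ P (n+1) := by
    intro n
    induction n with
    | zero => exact ⟨h0, h1⟩
    | succ k ih => exact ⟨ih.2, hstep k ih.1 ih.2⟩
  exact fun n => (key n).1

/-- The rational sequence. -/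
def rho (μ q : ℚ) : ℕ → ℚ
  | 0 => μ
  | 1 => 1
  | (n+2) => (rho μ q n - 2*(2*(n:ℚ)+3) * rho μ q (n+1)) / (4*q)

end RTanhAux

open RTanhAux in
theorem r_mul_tanh_irrational (r : ℝ) (hr : r ≠ 0) (hq : ∃ q : ℚ, r ^ 2 = (q : ℝ)) :
    Irrational (r * Real.tanh r) := by
  obtain ⟨q, hq⟩ := hq
  rintro ⟨p, hp⟩
  have hx : (0:ℝ) < (q:ℝ) := by rw [← hq]; positivity
  have hq0 : 0 < q := by exact_mod_cast hx
  set X : ℝ := (q : ℝ) with hX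
  have hXpos : 0 < X := hx
  have hXne : X ≠ 0 := hXpos.ne'
  have hsinh : Real.sinh r = r * c X 0 := by rw [← hq]; exact sinh_eq r
  have hcosh : Real.cosh r = c X 0 + 2 * X * c X 1 := by rw [← hq]; exact cosh_eq r
  have hcpos : 0 < Real.cosh r := Real.cosh_pos r
  have c0pos := c_pos X hXpos 0
  have c1pos := c_pos X hXpos 1
  -- the basic equation
  have heq : (p:ℝ) * (c X 0 + 2 * X * c X 1) = X * c X 0 := by
    have h1 : (p:ℝ) * Real.cosh r = r * Real.sinh r := by
      rw [hp, Real.tanh_eq_sinh_div_cosh]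
      field_simp
    rw [hcosh, hsinh] at h1
    calc (p:ℝ) * (c X 0 + 2 * X * c X 1) = r * (r * c X 0) := h1
      _ = r^2 * c X 0 := by ring
      _ = X * c X 0 := by rw [hq]
  have hqp : q ≠ p := by
    intro h
    have hXp : X = (p:ℝ) := by rw [hX, h]
    rw [← hXp] at heq
    nlinarith [c0pos, c1pos, hXpos, mul_pos (mul_pos hXpos hXpos) c1pos]
  set μ : ℚ := 2*q*p/(q-p) with hμ
  have hqpne : ((q:ℝ) - (p:ℝ)) ≠ 0 := by
    have h : (q:ℚ) - p ≠ 0 := sub_ne_zero.mpr hqp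
    exact_mod_cast h
  have hmu : (μ:ℝ) * c X 1 = c X 0 := by
    rw [hμ]
    push_cast
    rw [div_mul_eq_mul_div, div_eq_iff hqpne]
    rw [← hX]
    linear_combination heq
  -- rho represents c
  have hrho : ∀ n, ((rho μ q n : ℚ) : ℝ) * c X 1 = c X n := by
    apply two_step
    · exact hmu
    · show ((1 : ℚ) : ℝ) * c X 1 = c X 1
      simp
    · intro n ih1 ih2
      have hrec := c_rec X hXpos.le n
      have h4X : (4:ℝ) * X ≠ 0 := by positivity
      have hthis : c X (n+2) = (c X n - 2*(2*(n:ℝ)+3) * c X (n+1)) / (4*X) := by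
        field_simp
        linarith [hrec]
      rw [hthis, ← ih1, ← ih2]
      show (((rho μ q n - 2*(2*(n:ℚ)+3) * rho μ q (n+1)) / (4*q) : ℚ) : ℝ) * c X 1 = _
      push_cast
      rw [← hX]
      field_simp
  have hrho_pos : ∀ n, 0 < rho μ q n := by
    intro n
    have h1 := hrho n
    have h2 := c_pos X hXpos n
    have h3 : (0:ℝ) < ((rho μ q n : ℚ) : ℝ) := by nlinarith [c1pos]
    exact_mod_cast h3
  -- integrality
  set N : ℤ := (4*q).num with hN
  set D : ℕ := (4*q).den with hD
  set t : ℕ := μ.den with ht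
  have h4qpos : 0 < 4*q := by positivity
  have hNpos : 0 < N := Rat.num_pos.mpr h4qpos
  have h4q : (4*q : ℚ) * (D:ℚ) = (N:ℚ) := by
    rw [hN, hD]; exact_mod_cast Rat.mul_den_eq_num (4*q)
  have htpos : 0 < (t:ℚ) := by
    have := μ.pos
    exact_mod_cast this
  have hNQpos : (0:ℚ) < (N:ℚ) := by exact_mod_cast hNpos
  have hint : ∀ n, ∃ k : ℤ, (k : ℚ) = rho μ q n * (t:ℚ) * (N:ℚ)^n := by
    apply two_step
    · refine ⟨μ.num, ?_⟩
      rw [pow_zero, mul_one, show rho μ q 0 = μ from rfl, ht]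
      exact (Rat.mul_den_eq_num μ).symm
    · exact ⟨t * N, by push_cast [show rho μ q 1 = 1 from rfl]; ring⟩
    · rintro n ⟨k1, hk1⟩ ⟨k2, hk2⟩
      refine ⟨D * ((N:ℤ) * k1 - 2*(2*(n:ℤ)+3) * k2), ?_⟩
      have hq4 : ((4:ℚ)*q) ≠ 0 := by positivity
      rw [show rho μ q (n+2) = (rho μ q n - 2*(2*(n:ℚ)+3) * rho μ q (n+1)) / (4*q) from rfl]
      push_cast
      rw [hk1, hk2, div_mul_eq_mul_div, div_mul_eq_mul_div, eq_div_iff hq4]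
      linear_combination ((N:ℚ)^(n+1) * (t:ℚ) *
        (rho μ q n - 2*(2*(n:ℚ)+3) * rho μ q (n+1))) * h4q
  have hone : ∀ n, (1:ℝ) ≤ ((rho μ q n : ℚ):ℝ) * (t:ℝ) * ((N:ℤ):ℝ)^n := by
    intro n
    obtain ⟨k, hk⟩ := hint n
    have hkpos : (0:ℚ) < (k:ℚ) := by
      rw [hk]
      exact mul_pos (mul_pos (hrho_pos n) htpos) (pow_pos hNQpos n)
    have hk1 : (1:ℤ) ≤ k := by exact_mod_cast hkpos
    have hk2 : (1:ℚ) ≤ rho μ q n * (t:ℚ) * (N:ℚ)^n := by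
      rw [← hk]; exact_mod_cast hk1
    exact_mod_cast hk2
  have hNR : (0:ℝ) < ((N:ℤ):ℝ) := by exact_mod_cast hNpos
  set E : ℝ := ∑' m : ℕ, X^m / (Nat.factorial m : ℝ) with hE
  have hbound : ∀ n, c X 1 ≤ (t:ℝ)*E*(((N:ℤ):ℝ)^n/(Nat.factorial n : ℝ)) := by
    intro n
    have h2 := hone n
    calc c X 1 = 1 * c X 1 := (one_mul _).symm
      _ ≤ (((rho μ q n : ℚ):ℝ) * (t:ℝ) * ((N:ℤ):ℝ)^n) * c X 1 := by nlinarith [c1pos]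
      _ = (t:ℝ)*((N:ℤ):ℝ)^n * (((rho μ q n : ℚ):ℝ) * c X 1) := by ring
      _ = (t:ℝ)*((N:ℤ):ℝ)^n * c X n := by rw [hrho n]
      _ ≤ (t:ℝ)*((N:ℤ):ℝ)^n * (E * (1/(Nat.factorial n : ℝ))) := by
          refine mul_le_mul_of_nonneg_left ?_ ?_
          · rw [hE]; exact c_le X hXpos.le n
          · exact mul_nonneg (by positivity) (pow_nonneg hNR.le n)
      _ = (t:ℝ)*E*(((N:ℤ):ℝ)^n/(Nat.factorial n : ℝ)) := by ring
  have htend : Tendsto (fun n : ℕ => (t:ℝ)*E*(((N:ℤ):ℝ)^n/(Nat.factorial n : ℝ)))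
      atTop (nhds 0) := by
    have h := (Real.summable_pow_div_factorial ((N:ℤ):ℝ)).tendsto_atTop_zero
    have h2 := h.const_mul ((t:ℝ)*E)
    simpa using h2
  obtain ⟨n, hn⟩ := (htend.eventually_lt_const c1pos).exists
  exact absurd (hbound n) (not_le.mpr hn)
end

section
/- For every nonzero rational number r, the real number e^r (the exponential of r) is irrational. -/
/-!
Hermite's argument, through the analytic estimate behind Lindemann–Weierstrass:
for `f = X - m` and every large prime `p` there are integers `n`, `k` with `p ∤ n` and
`|n e^m - p k| ≤ c^p / (p - 1)!`. If `e^m = a / b`, then `b (n e^m - p k) = n a - p b k` is an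
integer not divisible by `p` (once `p > |a|`), hence nonzero, so `1 ≤ b c^p / (p - 1)!`, which
fails for large `p`. The rational case reduces to the integral one since `(e^r)^den = e^num`.
-/

open Polynomial Filter
open scoped Nat

theorem Rat.inv_den_le_abs_intCast_mul_sub (q : ℚ) {n k : ℤ} (h : n * q ≠ k) :
    (q.den : ℝ)⁻¹ ≤ |(n : ℝ) * q - k| := by
  have hden : (0 : ℝ) < q.den := Nat.cast_pos.2 q.den_pos
  have hN : n * q.num - k * q.den ≠ 0 := by
    rw [sub_ne_zero]
    contrapose! h
    rw [← Rat.num_div_den q]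
    field_simp
    exact_mod_cast h.trans (mul_comm _ _)
  have : |(n * q - k : ℝ)| = |((n * q.num - k * q.den : ℤ) : ℝ)| / q.den := by
    rw [eq_div_iff hden.ne', ← abs_of_pos hden, ← abs_mul]
    push_cast
    rw [Rat.cast_def]
    field_simp
  rw [this, div_eq_mul_inv]
  exact le_mul_of_one_le_left (by positivity) (mod_cast Int.one_le_abs hN)

theorem Rat.intCast_mul_ne_of_prime_not_dvd (q : ℚ) {p : ℕ} (hp : p.Prime) {n : ℤ}
    (hpn : ¬(p : ℤ) ∣ n) (k : ℤ) (hpq : ¬(p : ℤ) ∣ q.num) : (n : ℚ) * q ≠ ((p * k : ℤ) : ℚ) := by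
  intro h
  have h' : n * q.num = p * (k * q.den) := by
    have : (n * q.num : ℚ) = (p * (k * q.den) : ℤ) := by
      rw [← Rat.mul_den_eq_num, ← mul_assoc, h]; push_cast; ring
    exact_mod_cast this
  exact (Int.Prime.dvd_mul' hp (Dvd.intro _ h'.symm)).elim hpn hpq

theorem eventually_pow_div_factorial_pred_lt (c : ℝ) {ε : ℝ} (hε : 0 < ε) :
    ∀ᶠ p : ℕ in atTop, c ^ p / (p - 1)! < ε := by
  have h : Tendsto (fun p : ℕ ↦ c * (c ^ (p - 1) / (p - 1)!)) atTop (nhds 0) := by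
    simpa using ((FloorSemiring.tendsto_pow_div_factorial_atTop c).comp
      (tendsto_sub_atTop_nat 1)).const_mul c
  filter_upwards [h.eventually_lt_const hε, eventually_ge_atTop 1] with p hp hp1
  rwa [mul_div_assoc', ← pow_succ', Nat.sub_add_cancel hp1] at hp

theorem irrational_exp_intCast {m : ℤ} (hm : m ≠ 0) : Irrational (Real.exp m) := by
  rintro ⟨q, hq⟩
  have hnum : q.num ≠ 0 := by
    rw [Rat.num_ne_zero, ← Rat.cast_ne_zero (α := ℝ), hq]; exact (Real.exp_pos _).ne'
  obtain ⟨c, hc⟩ := LindemannWeierstrass.exp_polynomial_approx (X - C m) (by simpa using hm)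
  obtain ⟨p, hp, hpmp, hpc⟩ := (Nat.frequently_atTop_iff_infinite.2 Nat.infinite_setOfPred_prime
    |>.and_eventually ((eventually_gt_atTop (m.natAbs ⊔ q.num.natAbs)).and
      (eventually_pow_div_factorial_pred_lt c (inv_pos.2 (Nat.cast_pos.2 q.den_pos))))).exists
  obtain ⟨hpm, hpq⟩ := max_lt_iff.1 hpmp
  obtain ⟨n, hpn, g, -, hg⟩ := hc p (by simpa using hpm) hp
  have happrox : |(n : ℝ) * q - ((p * g.eval m : ℤ) : ℝ)| ≤ c ^ p / (p - 1)! := by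
    convert hg (r := m) (by rw [aroots_X_sub_C]; simp) using 1
    rw [← Real.norm_eq_abs, ← Complex.norm_real]
    congr 1
    have hqC : (q : ℂ) = Complex.exp m := by
      rw [← Complex.ofReal_ratCast, hq]; push_cast; rfl
    have hgC : aeval (m : ℂ) g = ((g.eval m : ℤ) : ℂ) := by
      simpa using aeval_algebraMap_apply ℂ m g
    push_cast
    rw [zsmul_eq_mul, nsmul_eq_mul, hqC, hgC]
  have hne := q.intCast_mul_ne_of_prime_not_dvd hp hpn (g.eval m) fun hdvd ↦
    hnum (Int.eq_zero_of_dvd_of_natAbs_lt_natAbs hdvd (by simpa using hpq))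
  exact (hpc.trans_le' happrox).not_ge (q.inv_den_le_abs_intCast_mul_sub hne)

theorem exp_rat_irrational (r : ℚ) (hr : r ≠ 0) : Irrational (Real.exp (r : ℝ)) := by
  refine .of_pow r.den ?_
  rw [← Real.exp_nat_mul, ← Rat.cast_natCast, ← Rat.cast_mul, mul_comm, Rat.mul_den_eq_num,
    Rat.cast_intCast]
  exact irrational_exp_intCast (Rat.num_ne_zero.2 hr)
end

section
/- For every real number r and every natural number n ≥ 2, R_n(r) = (2n - 1) · R_{n-1}(r) - r^2 · R_{n-2}(r). -/
open MeasureTheory intervalIntegral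

/-- Hermite's integral `R_n(r) = ∫_0^r ((r² - x²)ⁿ / (2ⁿ n!)) cos x dx`. -/
noncomputable def R (n : ℕ) (r : ℝ) : ℝ :=
  ∫ x in (0:ℝ)..r, ((r ^ 2 - x ^ 2) ^ n / (2 ^ n * n.factorial)) * Real.cos x

/-!
With `wₙ(x) = (r² - x²)ⁿ / (2ⁿ n!)` one has `w'ₙ₊₁ = -x wₙ` and `(r² - x²) wₙ = 2(n+1) wₙ₊₁`.
These make `F = wₙ₊₂ sin - x wₙ₊₁ cos` an antiderivative of
`(wₙ₊₂ - (2n+3) wₙ₊₁ + r² wₙ) cos`, and `F` vanishes at `0` and at `r`.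
-/

open Real

noncomputable def hermiteWeight (n : ℕ) (r x : ℝ) : ℝ :=
  (r ^ 2 - x ^ 2) ^ n / (2 ^ n * n.factorial)

section hermiteWeight

variable (n : ℕ) (r : ℝ)

lemma R_eq_integral_hermiteWeight :
    R n r = ∫ x in (0:ℝ)..r, hermiteWeight n r x * cos x := rfl

@[fun_prop]
lemma continuous_hermiteWeight : Continuous (hermiteWeight n r) := by
  unfold hermiteWeight; fun_prop

lemma hermiteWeight_succ_self : hermiteWeight (n + 1) r r = 0 := by
  simp [hermiteWeight]

lemma sq_sub_sq_mul_hermiteWeight (x : ℝ) :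
    (r ^ 2 - x ^ 2) * hermiteWeight n r x = 2 * (n + 1) * hermiteWeight (n + 1) r x := by
  simp only [hermiteWeight, Nat.factorial_succ, pow_succ]
  push_cast
  field_simp

lemma hasDerivAt_hermiteWeight_succ (x : ℝ) :
    HasDerivAt (hermiteWeight (n + 1) r) (-x * hermiteWeight n r x) x := by
  have hbase : HasDerivAt (fun y : ℝ => r ^ 2 - y ^ 2) (-(2 * x)) x := by
    simpa using (hasDerivAt_pow 2 x).const_sub (r ^ 2)
  refine ((hbase.pow (n + 1)).div_const (2 ^ (n + 1) * ((n + 1).factorial : ℝ))).congr_deriv ?_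
  simp only [hermiteWeight, Nat.factorial_succ, pow_succ, Nat.add_sub_cancel]
  push_cast
  field_simp

lemma hasDerivAt_hermite_antideriv (x : ℝ) :
    HasDerivAt (fun y => hermiteWeight (n + 2) r y * sin y - y * hermiteWeight (n + 1) r y * cos y)
      (hermiteWeight (n + 2) r x * cos x - (2 * n + 3) * (hermiteWeight (n + 1) r x * cos x)
        + r ^ 2 * (hermiteWeight n r x * cos x)) x := by
  refine (((hasDerivAt_hermiteWeight_succ (n + 1) r x).mul (hasDerivAt_sin x)).sub
    (((hasDerivAt_id x).mul (hasDerivAt_hermiteWeight_succ n r x)).mul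
      (hasDerivAt_cos x))).congr_deriv ?_
  simp only [id_eq, Pi.mul_apply]
  linear_combination (-cos x) * sq_sub_sq_mul_hermiteWeight n r x

lemma R_add_two_sub_add_eq_zero :
    R (n + 2) r - (2 * n + 3) * R (n + 1) r + r ^ 2 * R n r = 0 := by
  have hint (k : ℕ) : IntervalIntegrable (fun x => hermiteWeight k r x * cos x) volume 0 r :=
    (by fun_prop : Continuous fun x => hermiteWeight k r x * cos x).intervalIntegrable 0 r
  have hFTC := integral_eq_sub_of_hasDerivAt (fun x _ => hasDerivAt_hermite_antideriv n r x)
    ((hint (n + 2)).sub ((hint (n + 1)).const_mul (2 * n + 3)) |>.add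
      ((hint n).const_mul (r ^ 2)))
  rw [integral_add ((hint _).sub ((hint _).const_mul _)) ((hint _).const_mul _),
    integral_sub (hint _) ((hint _).const_mul _), intervalIntegral.integral_const_mul,
    intervalIntegral.integral_const_mul, hermiteWeight_succ_self,
    hermiteWeight_succ_self n] at hFTC
  simpa [R_eq_integral_hermiteWeight] using hFTC

end hermiteWeight

theorem R_recurrence (r : ℝ) (n : ℕ) (hn : 2 ≤ n) :
    R n r = (2 * (n : ℝ) - 1) * R (n - 1) r - r ^ 2 * R (n - 2) r := by
  obtain ⟨m, rfl⟩ := Nat.exists_eq_add_of_le' hn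
  have h := R_add_two_sub_add_eq_zero m r
  simp only [Nat.add_sub_cancel, show m + 2 - 1 = m + 1 from rfl]
  push_cast
  linear_combination h
end

section
/- Fix a real number r and a natural number n ≥ 2, and define f_n(x) = (r^2 - x^2)^n / (2^n · n!) for real x. Then the second derivative of f_n satisfies f_n''(x) = -(2n - 1) · f_{n-1}(x) + r^2 · f_{n-2}(x) for all real x. -/
/-! Writing `f m x = (r ^ 2 - x ^ 2) ^ m / (2 ^ m * m !)`, one has `(f (m + 1))' = -x · f m`, so
`(f (m + 2))'' = -f (m + 1) + x ^ 2 · f m`; the identity `(r ^ 2 - x ^ 2) · f m = 2 (m + 1) · f (m + 1)`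
then turns `x ^ 2 · f m` into `r ^ 2 · f m - 2 (m + 1) · f (m + 1)`. -/

open Nat

noncomputable def scaledPow (r : ℝ) (m : ℕ) (x : ℝ) : ℝ :=
  (r ^ 2 - x ^ 2) ^ m / (2 ^ m * m !)

namespace scaledPow

variable (r : ℝ) (m : ℕ)

theorem hasDerivAt_succ (x : ℝ) :
    HasDerivAt (scaledPow r (m + 1)) (-x * scaledPow r m x) x := by
  have hbase : HasDerivAt (fun x : ℝ => r ^ 2 - x ^ 2) (-(2 * x)) x := by
    simpa using (hasDerivAt_pow 2 x).const_sub (r ^ 2)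
  refine ((hbase.pow (m + 1)).div_const (2 ^ (m + 1) * (m + 1)! : ℝ)).congr_deriv ?_
  simp only [scaledPow, Nat.add_sub_cancel]
  rw [factorial_succ]
  push_cast
  field_simp
  ring

theorem deriv_succ : deriv (scaledPow r (m + 1)) = fun x => -x * scaledPow r m x :=
  funext fun x => (hasDerivAt_succ r m x).deriv

theorem sub_sq_mul (x : ℝ) :
    (r ^ 2 - x ^ 2) * scaledPow r m x = 2 * (m + 1) * scaledPow r (m + 1) x := by
  unfold scaledPow
  rw [factorial_succ]
  push_cast
  field_simp
  ring

theorem deriv_deriv_add_two (x : ℝ) :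
    deriv (deriv (scaledPow r (m + 2))) x =
      -(2 * m + 3) * scaledPow r (m + 1) x + r ^ 2 * scaledPow r m x := by
  have hsecond : HasDerivAt (deriv (scaledPow r (m + 2)))
      (-scaledPow r (m + 1) x + x ^ 2 * scaledPow r m x) x := by
    rw [deriv_succ]
    refine ((hasDerivAt_neg x).mul (hasDerivAt_succ r m x)).congr_deriv ?_
    ring
  rw [hsecond.deriv]
  linear_combination (-1 : ℝ) * sub_sq_mul r m x

end scaledPow

theorem second_deriv_f (r : ℝ) (n : ℕ) (hn : 2 ≤ n)
    (f : ℕ → ℝ → ℝ)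
    (hf : ∀ m x, f m x = (r ^ 2 - x ^ 2) ^ m / (2 ^ m * m.factorial)) :
    ∀ x : ℝ, deriv (deriv (f n)) x = -(2 * (n : ℝ) - 1) * f (n - 1) x + r ^ 2 * f (n - 2) x := by
  intro x
  obtain ⟨m, rfl⟩ := Nat.exists_eq_add_of_le' hn
  obtain rfl : f = scaledPow r := funext fun m => funext (hf m)
  rw [scaledPow.deriv_deriv_add_two]
  simp only [show m + 2 - 1 = m + 1 by omega, Nat.add_sub_cancel, cast_add, cast_ofNat]
  ring
end

section
/- Let f : ℝ → ℝ be continuous. Define S_0(r) = ∫_0^r f(t) dt and, for n ≥ 1, S_n(r) = ∫_0^r t · S_{n-1}(t) dt. Then for every natural number n and every real number r, S_n(r) = (r^{2n+1} / (2^n · n!)) · ∫_0^1 (1 - z^2)^n · f(r·z) dz. -/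
open MeasureTheory intervalIntegral

/-!
Put `T_n(r) = ∫_0^r (r² - u²)^n f(u) du`; the substitution `u = rz` turns it into
`r^(2n+1) ∫_0^1 (1 - z²)^n f(rz) dz`. Differentiating under the integral sign, the boundary
term vanishes and `T_{n+1}'(r) = 2(n+1) r T_n(r)`, so `S_n = T_n / (2^n n!)` by induction. The
differentiation is made elementary by expanding `(x² - u²)^n` binomially into a finite sum of
products `a(x) b(u)`, for which the Leibniz rule is the product rule plus the fundamental
theorem of calculus.
-/

theorem hasDerivAt_integral_sum_mul {ι : Type*} (s : Finset ι) {a b : ι → ℝ → ℝ}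
    {a' : ι → ℝ} {r : ℝ} (ha : ∀ i ∈ s, HasDerivAt (a i) (a' i) r)
    (hb : ∀ i ∈ s, Continuous (b i)) :
    HasDerivAt (fun x => ∫ u in (0:ℝ)..x, ∑ i ∈ s, a i x * b i u)
      (∑ i ∈ s, a i r * b i r + ∫ u in (0:ℝ)..r, ∑ i ∈ s, a' i * b i u) r := by
  have hsplit : ∀ (c : ι → ℝ) (x : ℝ),
      ∫ u in (0:ℝ)..x, ∑ i ∈ s, c i * b i u =
        ∑ i ∈ s, c i * ∫ u in (0:ℝ)..x, b i u := by
    intro c x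
    rw [integral_finsetSum fun i hi => ((hb i hi).const_mul (c i)).intervalIntegrable _ _]
    simp only [intervalIntegral.integral_const_mul]
  simp_rw [hsplit]
  rw [add_comm, ← Finset.sum_add_distrib]
  exact HasDerivAt.fun_sum fun i hi =>
    (ha i hi).mul ((hb i hi).integral_hasStrictDerivAt 0 r).hasDerivAt

theorem sq_sub_sq_pow_eq_sum (n : ℕ) (x u : ℝ) :
    (x ^ 2 - u ^ 2) ^ n =
      ∑ m ∈ Finset.range (n + 1), (x ^ 2) ^ m * ((-u ^ 2) ^ (n - m) * n.choose m) := by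
  rw [sub_eq_add_neg, add_pow]
  exact Finset.sum_congr rfl fun m _ => by ring

theorem hasDerivAt_integral_sq_sub_sq_pow_mul {g : ℝ → ℝ} (hg : Continuous g) (n : ℕ)
    (r : ℝ) :
    HasDerivAt (fun x => ∫ u in (0:ℝ)..x, (x ^ 2 - u ^ 2) ^ n * g u)
      ((r ^ 2 - r ^ 2) ^ n * g r +
        ∫ u in (0:ℝ)..r, n * (r ^ 2 - u ^ 2) ^ (n - 1) * (2 * r) * g u) r := by
  set b : ℕ → ℝ → ℝ := fun m u => (-u ^ 2) ^ (n - m) * n.choose m * g u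
  have hsep : ∀ x u, (x ^ 2 - u ^ 2) ^ n * g u =
      ∑ m ∈ Finset.range (n + 1), (x ^ 2) ^ m * b m u := by
    intro x u
    simp only [b, sq_sub_sq_pow_eq_sum, Finset.sum_mul, mul_assoc]
  have hsq : HasDerivAt (fun x : ℝ => x ^ 2) (2 * r) r := by simpa using hasDerivAt_pow 2 r
  have ha : ∀ m ∈ Finset.range (n + 1),
      HasDerivAt (fun x : ℝ => (x ^ 2) ^ m) (m * (r ^ 2) ^ (m - 1) * (2 * r)) r :=
    fun m _ => hsq.fun_pow m
  -- both sides are the derivative at `r` of `x ↦ (x ^ 2 - u ^ 2) ^ n * g u`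
  have hkernel : ∀ u, ∑ m ∈ Finset.range (n + 1), m * (r ^ 2) ^ (m - 1) * (2 * r) * b m u =
      n * (r ^ 2 - u ^ 2) ^ (n - 1) * (2 * r) * g u := by
    intro u
    have hpow := ((hsq.sub_const (u ^ 2)).fun_pow n).mul_const (g u)
    simp only [hsep] at hpow
    exact (HasDerivAt.fun_sum fun m hm => (ha m hm).mul_const (b m u)).unique hpow
  have hb : ∀ m ∈ Finset.range (n + 1), Continuous (b m) := fun m _ => by fun_prop
  simp only [hsep]
  convert hasDerivAt_integral_sum_mul _ ha hb using 2
  simp only [hkernel]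

theorem hasDerivAt_integral_sq_sub_sq_pow_succ_mul {g : ℝ → ℝ} (hg : Continuous g) (n : ℕ)
    (r : ℝ) :
    HasDerivAt (fun x => ∫ u in (0:ℝ)..x, (x ^ 2 - u ^ 2) ^ (n + 1) * g u)
      (2 * (n + 1) * (r * ∫ u in (0:ℝ)..r, (r ^ 2 - u ^ 2) ^ n * g u)) r := by
  convert hasDerivAt_integral_sq_sub_sq_pow_mul hg (n + 1) r using 1
  rw [sub_self, zero_pow n.succ_ne_zero, zero_mul, zero_add,
    ← intervalIntegral.integral_const_mul, ← intervalIntegral.integral_const_mul]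
  push_cast
  congr 1 with u
  ring

theorem continuous_integral_sq_sub_sq_pow_mul {g : ℝ → ℝ} (hg : Continuous g) (n : ℕ) :
    Continuous fun x => ∫ u in (0:ℝ)..x, (x ^ 2 - u ^ 2) ^ n * g u :=
  continuous_iff_continuousAt.2 fun r =>
    (hasDerivAt_integral_sq_sub_sq_pow_mul hg n r).continuousAt

theorem integral_mul_integral_sq_sub_sq_pow_mul {g : ℝ → ℝ} (hg : Continuous g) (n : ℕ)
    (r : ℝ) :
    ∫ t in (0:ℝ)..r, t * ∫ u in (0:ℝ)..t, (t ^ 2 - u ^ 2) ^ n * g u =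
      (∫ u in (0:ℝ)..r, (r ^ 2 - u ^ 2) ^ (n + 1) * g u) / (2 * (n + 1)) := by
  have hcont := continuous_id.mul (continuous_integral_sq_sub_sq_pow_mul hg n)
  have hFTC := integral_eq_sub_of_hasDerivAt
    (fun t _ => hasDerivAt_integral_sq_sub_sq_pow_succ_mul hg n t)
    ((hcont.const_mul (2 * ((n : ℝ) + 1))).intervalIntegrable 0 r)
  rw [intervalIntegral.integral_const_mul, integral_same, sub_zero] at hFTC
  rw [← hFTC]
  field_simp

theorem integral_sq_sub_sq_pow_mul_eq (g : ℝ → ℝ) (n : ℕ) (r : ℝ) :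
    ∫ u in (0:ℝ)..r, (r ^ 2 - u ^ 2) ^ n * g u =
      r ^ (2 * n + 1) * ∫ z in (0:ℝ)..1, (1 - z ^ 2) ^ n * g (r * z) := by
  have hsubst := smul_integral_comp_mul_left (fun u => (r ^ 2 - u ^ 2) ^ n * g u) r
    (a := 0) (b := 1)
  simp only [mul_zero, mul_one, smul_eq_mul] at hsubst
  rw [← hsubst, pow_succ' r (2 * n), mul_assoc,
    ← intervalIntegral.integral_const_mul (r ^ (2 * n))]
  refine congrArg (r * ·) (integral_congr fun z _ => ?_)
  rw [show r ^ 2 - (r * z) ^ 2 = r ^ 2 * (1 - z ^ 2) by ring, mul_pow, ← pow_mul]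
  ring

theorem iterated_integral_formula (f : ℝ → ℝ) (hf : Continuous f)
    (S : ℕ → ℝ → ℝ)
    (hS0 : ∀ r : ℝ, S 0 r = ∫ t in (0:ℝ)..r, f t)
    (hSn : ∀ (n : ℕ) (r : ℝ), S (n + 1) r = ∫ t in (0:ℝ)..r, t * S n t) :
    ∀ (n : ℕ) (r : ℝ),
      S n r = (r ^ (2 * n + 1) / (2 ^ n * n.factorial)) *
        ∫ z in (0:ℝ)..1, (1 - z ^ 2) ^ n * f (r * z) := by
  have hS : ∀ n r, S n r =
      (∫ u in (0:ℝ)..r, (r ^ 2 - u ^ 2) ^ n * f u) / (2 ^ n * n.factorial) := by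
    intro n
    induction n with
    | zero => simp [hS0]
    | succ n ih =>
      intro r
      simp_rw [hSn, ih, mul_div_assoc', intervalIntegral.integral_div,
        integral_mul_integral_sq_sub_sq_pow_mul hf, Nat.factorial_succ]
      push_cast
      field_simp
      ring
  intro n r
  rw [hS, integral_sq_sub_sq_pow_mul_eq]
  ring
end

section
/- For every natural number n, R_n(π/2) = H_n / 2^{n+1}, where H_n = ∫_0^π (x^n (π - x)^n / n!) · sin x dx. -/
open MeasureTheory intervalIntegral Real

private lemma aux_cont (n : ℕ) :
    Continuous (fun u : ℝ => ((π / 2) ^ 2 - u ^ 2) ^ n * Real.cos u) := by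
  continuity

theorem R_pi_div_two_eq (n : ℕ) :
    R n (π / 2) = (∫ x in (0:ℝ)..π, (x ^ n * (π - x) ^ n / n.factorial) * Real.sin x) /
      2 ^ (n + 1) := by
  set f : ℝ → ℝ := fun u => ((π / 2) ^ 2 - u ^ 2) ^ n * Real.cos u with hf
  have key : (∫ x in (0:ℝ)..π, (x ^ n * (π - x) ^ n / n.factorial) * Real.sin x)
      = ∫ u in (-(π/2))..(π/2), (1 / n.factorial : ℝ) * f u := by
    have h := intervalIntegral.integral_comp_add_right (a := -(π/2)) (b := π/2)
      (fun x => (x ^ n * (π - x) ^ n / n.factorial) * Real.sin x) (π/2)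
    rw [show -(π/2) + π/2 = (0:ℝ) by ring, show π/2 + π/2 = π by ring] at h
    rw [← h]
    apply intervalIntegral.integral_congr
    intro x _
    simp only [hf]
    have h1 : (x + π / 2) ^ n * (π - (x + π / 2)) ^ n = ((π / 2) ^ 2 - x ^ 2) ^ n := by
      rw [← mul_pow]; congr 1; ring
    have h2 : Real.sin (x + π / 2) = Real.cos x := Real.sin_add_pi_div_two x
    rw [h1, h2]; ring
  have heven : (∫ u in (-(π/2))..(π/2), f u) = 2 * ∫ u in (0:ℝ)..(π/2), f u := by
    have hi1 : IntervalIntegrable f volume (-(π/2)) 0 :=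
      (aux_cont n).intervalIntegrable _ _
    have hi2 : IntervalIntegrable f volume 0 (π/2) :=
      (aux_cont n).intervalIntegrable _ _
    have hsplit := intervalIntegral.integral_add_adjacent_intervals hi1 hi2
    have hneg : (∫ u in (-(π/2))..(0:ℝ), f u) = ∫ u in (0:ℝ)..(π/2), f u := by
      have := intervalIntegral.integral_comp_neg (a := (0:ℝ)) (b := π/2) f
      rw [neg_zero] at this
      rw [← this]
      apply intervalIntegral.integral_congr
      intro x _
      simp [hf]
    rw [← hsplit, hneg]; ring
  rw [intervalIntegral.integral_const_mul] at key
  have hR : R n (π / 2) = (1 / (2 ^ n * n.factorial) : ℝ) * ∫ u in (0:ℝ)..(π/2), f u := by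
    rw [R, ← intervalIntegral.integral_const_mul]
    apply intervalIntegral.integral_congr
    intro x _
    simp only [hf]
    ring
  rw [hR, key, heven]
  have h2 : (n.factorial : ℝ) ≠ 0 := Nat.cast_ne_zero.mpr n.factorial_ne_zero
  field_simp
  ring
end

section
/- For every natural number n ≥ 1, the function r ↦ R_n(r) is differentiable on ℝ and its derivative satisfies (d/dr) R_n(r) = r · R_{n-1}(r) for every real r. -/
open MeasureTheory intervalIntegral

theorem hasDerivAt_integral_of_finite_rank {ι : Type*} {s : Finset ι} {g h : ι → ℝ → ℝ}
    {F F' : ℝ → ℝ → ℝ} {a r : ℝ} (hF : ∀ r x, F r x = ∑ k ∈ s, g k r * h k x)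
    (hF' : ∀ x, HasDerivAt (fun r => F r x) (F' r x) r)
    (hg : ∀ k ∈ s, DifferentiableAt ℝ (g k) r) (hh : ∀ k ∈ s, Continuous (h k)) :
    HasDerivAt (fun r => ∫ x in a..r, F r x) (F r r + ∫ x in a..r, F' r x) r := by
  have integral_sum_mul : ∀ (c : ι → ℝ) (b : ℝ),
      ∫ x in a..b, ∑ k ∈ s, c k * h k x = ∑ k ∈ s, c k * ∫ x in a..b, h k x := fun c b => by
    rw [integral_finsetSum fun k hk => ((hh k hk).intervalIntegrable a b).const_mul (c k)]
    simp_rw [intervalIntegral.integral_const_mul]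
  have hF'_eq : ∀ x, F' r x = ∑ k ∈ s, deriv (g k) r * h k x := fun x =>
    (hF' x).unique <| by
      simp_rw [hF]
      exact HasDerivAt.fun_sum fun k hk => (hg k hk).hasDerivAt.mul_const _
  have hderiv : HasDerivAt (fun r => ∑ k ∈ s, g k r * ∫ x in a..r, h k x)
      (∑ k ∈ s, (deriv (g k) r * (∫ x in a..r, h k x) + g k r * h k r)) r :=
    HasDerivAt.fun_sum fun k hk => (hg k hk).hasDerivAt.fun_mul
      (integral_hasDerivAt_right ((hh k hk).intervalIntegrable a r)
        ((hh k hk).stronglyMeasurableAtFilter _ _) (hh k hk).continuousAt)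
  simp_rw [hF, integral_sum_mul]
  convert hderiv using 1
  simp_rw [hF'_eq, integral_sum_mul, Finset.sum_add_distrib, add_comm]

noncomputable def hermiteIntegrand (n : ℕ) (r x : ℝ) : ℝ :=
  (r ^ 2 - x ^ 2) ^ n / (2 ^ n * n.factorial) * Real.cos x

theorem hermiteIntegrand_eq_sum (n : ℕ) (r x : ℝ) :
    hermiteIntegrand n r x = ∑ k ∈ Finset.range (n + 1),
      n.choose k * (r ^ 2) ^ k / (2 ^ n * n.factorial) * ((-x ^ 2) ^ (n - k) * Real.cos x) := by
  rw [hermiteIntegrand, sub_eq_add_neg, add_pow, Finset.sum_div, Finset.sum_mul]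
  exact Finset.sum_congr rfl fun k _ => by ring

theorem hermiteIntegrand_self {n : ℕ} (hn : n ≠ 0) (r : ℝ) : hermiteIntegrand n r r = 0 := by
  simp [hermiteIntegrand, hn]

theorem hasDerivAt_hermiteIntegrand_succ (n : ℕ) (r x : ℝ) :
    HasDerivAt (fun r => hermiteIntegrand (n + 1) r x) (r * hermiteIntegrand n r x) r := by
  unfold hermiteIntegrand
  refine ((((hasDerivAt_pow 2 r).sub_const (x ^ 2)).fun_pow (n + 1)).div_const _
    |>.mul_const _).congr_deriv ?_
  rw [Nat.factorial_succ]
  push_cast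
  field_simp
  ring

theorem hasDerivAt_R_succ (n : ℕ) (r : ℝ) : HasDerivAt (R (n + 1)) (r * R n r) r := by
  have h := hasDerivAt_integral_of_finite_rank (a := 0) (F' := fun r x => r * hermiteIntegrand n r x)
    (hermiteIntegrand_eq_sum (n + 1)) (hasDerivAt_hermiteIntegrand_succ n r)
    (fun _ _ => by fun_prop) (fun _ _ => by fun_prop)
  rwa [hermiteIntegrand_self n.succ_ne_zero, zero_add, intervalIntegral.integral_const_mul] at h

theorem R_deriv (n : ℕ) (hn : 1 ≤ n) :
    Differentiable ℝ (R n) ∧ ∀ r : ℝ, deriv (R n) r = r * R (n - 1) r := by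
  obtain ⟨m, rfl⟩ := Nat.exists_eq_add_of_le' hn
  exact ⟨fun r => (hasDerivAt_R_succ m r).differentiableAt, fun r => (hasDerivAt_R_succ m r).deriv⟩
end
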